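/- Let K be the tridiagonal period matrix as above and β = -(1/2)𝕀 where 𝕀 = (1,...,1). Then the point Z = βK lies on the boundary of the fundamental region D_0: the inequality -lZᵀ ≤ (1/2)lKlᵀ holds for all l ∈ ℤ^g, with equality for l = 𝕀. -/

import Mathlib

open Finset

/-- The tridiagonal period matrix of the tropical spectral curve, in 0-based
indexing: row `a` corresponds to the 1-based index `a+1`. -/
noncomputable def periodK (g : ℕ) (lam p : ℕ → ℝ) : Matrix (Fin g) (Fin g) ℝ :=
  fun a b =>
    if a = b then p a.val + p (a.val + 1) + 2 * (lam (a.val + 1) - lam a.val)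
    else if a.val + 1 = b.val then -p (a.val + 1)
    else if b.val + 1 = a.val then -p (b.val + 1)
    else 0

/-!
Because `K` is symmetric, `-l Zᵀ = ½ 𝕀 K lᵀ`, so the inequality says `l K (l - 𝕀)ᵀ ≥ 0`, with
equality at `l = 𝕀` by the definition of `Z`. The matrix `K` is the weighted Laplacian of the path
`1 — 2 — ⋯ — g` with edge weights `p₁, …, p_{g-1}`, whose two end vertices are tied to the ground
by weights `p₀` and `p_g`, plus the diagonal matrix `2 (λᵢ - λᵢ₋₁)`. Hence `l K (l - 𝕀)ᵀ` is
`Σ pᵢ (lᵢ - lᵢ₊₁)²` plus nonnegative multiples of `lᵢ² - lᵢ`; the latter are `≥ 0` for integers,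
and the weights are `≥ 0` because `λ` increases and `L` dominates `2 Σ (λᵢ - λ₀)`.
-/

def tridiag {R : Type*} [Zero R] (d e : ℕ → R) (a b : ℕ) : R :=
  if a = b then d a else if a + 1 = b then e a else if b + 1 = a then e b else 0

lemma periodK_apply_eq_tridiag (g : ℕ) (lam p : ℕ → ℝ) (i j : Fin g) :
    periodK g lam p i j =
      tridiag (fun a => p a + p (a + 1) + 2 * (lam (a + 1) - lam a)) (fun a => -p (a + 1)) i j := by
  simp only [periodK, tridiag, Fin.ext_iff]

section Tridiagonal

variable {R : Type*} [CommRing R]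

lemma tridiag_mul (d e : ℕ → R) (F : ℕ → ℕ → R) (a b : ℕ) :
    tridiag d e a b * F a b =
      (if a = b then d a * F a a else 0) + (if a + 1 = b then e a * F a (a + 1) else 0) +
        (if b + 1 = a then e b * F (b + 1) b else 0) := by
  unfold tridiag
  split_ifs <;> subst_vars <;> first | omega | ring

lemma sum_range_sum_range_tridiag_mul (d e : ℕ → R) (F : ℕ → ℕ → R) (n : ℕ) :
    ∑ a ∈ range (n + 1), ∑ b ∈ range (n + 1), tridiag d e a b * F a b =
      ∑ a ∈ range (n + 1), d a * F a a + ∑ a ∈ range n, e a * (F a (a + 1) + F (a + 1) a) := by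
  have hshift (f : ℕ → R) :
      ∑ a ∈ range (n + 1), (if a + 1 ∈ range (n + 1) then f a else 0) = ∑ a ∈ range n, f a := by
    rw [sum_range_succ]
    simp +contextual [sum_ite, filter_true_of_mem]
  simp only [tridiag_mul, sum_add_distrib, sum_ite_eq, sum_ite_mem, inter_self]
  rw [sum_comm (f := fun a b => if b + 1 = a then e b * F (b + 1) b else 0)]
  simp only [sum_ite_eq, hshift, mul_add, sum_add_distrib, add_assoc]

/-- The left side is `y K (y - 𝕀)ᵀ` for `K` the Laplacian of the path with edge weights `c`,
grounded at both ends, plus `diag w`. -/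
lemma sum_range_laplacian_form (c w y : ℕ → R) (n : ℕ) :
    ∑ a ∈ range (n + 1), (c a + c (a + 1) + w a) * (y a * y a - y a)
      + ∑ a ∈ range n, -c (a + 1) * ((y a * y (a + 1) - y (a + 1)) + (y (a + 1) * y a - y a)) =
    c 0 * (y 0 ^ 2 - y 0) + c (n + 1) * (y n ^ 2 - y n)
      + ∑ a ∈ range n, c (a + 1) * (y a - y (a + 1)) ^ 2
      + ∑ a ∈ range (n + 1), w a * (y a ^ 2 - y a) := by
  induction n with
  | zero => simp only [zero_add, sum_range_one, range_zero, sum_empty]; ring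
  | succ n ih =>
    simp only [sum_range_succ] at ih ⊢
    linear_combination ih

end Tridiagonal

lemma sum_fin_sum_fin_eq_sum_range_sum_range {M : Type*} [AddCommMonoid M] (n : ℕ)
    (F : ℕ → ℕ → M) :
    ∑ i : Fin n, ∑ j : Fin n, F i j = ∑ a ∈ range n, ∑ b ∈ range n, F a b := by
  rw [← Fin.sum_univ_eq_sum_range]
  exact sum_congr rfl fun i _ => Fin.sum_univ_eq_sum_range (F i) n

lemma sum_range_tridiag_laplacian_mul_nonneg {R : Type*} [CommRing R] [LinearOrder R]
    [IsStrictOrderedRing R] (c w : ℕ → R) (n : ℕ) (hc : ∀ a ≤ n + 1, 0 ≤ c a)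
    (hw : ∀ a ≤ n, 0 ≤ w a) (y : ℕ → ℤ) :
    0 ≤ ∑ a ∈ range (n + 1), ∑ b ∈ range (n + 1),
      tridiag (fun a => c a + c (a + 1) + w a) (fun a => -c (a + 1)) a b *
        ((y a : R) * y b - y b) := by
  have hy (a : ℕ) : (0 : R) ≤ (y a : R) ^ 2 - y a := by
    rw [sub_nonneg]
    exact_mod_cast Int.le_self_sq (y a)
  rw [sum_range_sum_range_tridiag_mul, sum_range_laplacian_form]
  have hedges : 0 ≤ ∑ a ∈ range n, c (a + 1) * ((y a : R) - y (a + 1)) ^ 2 :=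
    sum_nonneg fun a ha => mul_nonneg (hc _ (by simp at ha; omega)) (sq_nonneg _)
  have hdiag : 0 ≤ ∑ a ∈ range (n + 1), w a * ((y a : R) ^ 2 - y a) :=
    sum_nonneg fun a ha => mul_nonneg (hw _ (by simp at ha; omega)) (hy a)
  have hfirst := mul_nonneg (hc 0 (by omega)) (hy 0)
  have hlast := mul_nonneg (hc (n + 1) le_rfl) (hy n)
  linarith

lemma sum_sum_periodK_mul_le (n : ℕ) (lam p : ℕ → ℝ) (hp : ∀ a ≤ n + 1, 0 ≤ p a)
    (hlam : ∀ a < n + 1, lam a ≤ lam (a + 1)) (l : Fin (n + 1) → ℤ) :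
    ∑ i, ∑ j, periodK (n + 1) lam p i j * (l j : ℝ) ≤
      ∑ i, ∑ j, (l i : ℝ) * periodK (n + 1) lam p i j * (l j : ℝ) := by
  set y : ℕ → ℤ := fun a => if h : a < n + 1 then l ⟨a, h⟩ else 0
  have hl (i : Fin (n + 1)) : l i = y i := by simp only [y, dif_pos i.isLt, Fin.eta]
  have hform := sum_range_tridiag_laplacian_mul_nonneg p (fun a => 2 * (lam (a + 1) - lam a)) n
    hp (fun a ha => by linarith [hlam a (by omega)]) y
  rw [← sum_fin_sum_fin_eq_sum_range_sum_range] at hform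
  simp only [← periodK_apply_eq_tridiag, ← hl] at hform
  rw [← sub_nonneg, ← sum_sub_distrib]
  refine hform.trans_eq (sum_congr rfl fun i _ => ?_)
  rw [← sum_sub_distrib]
  exact sum_congr rfl fun j _ => by ring

lemma periodWeights_nonneg (g : ℕ) (L : ℝ) (lam p : ℕ → ℝ)
    (hlam : ∀ i, i < g → lam i < lam (i + 1))
    (hL : 2 * ∑ i ∈ Icc 1 g, (lam i - lam 0) < L) (hp0 : p 0 = L)
    (hp : ∀ i, 1 ≤ i → i ≤ g → p i = L - 2 * ∑ j ∈ Icc 1 g, min (lam i - lam 0) (lam j - lam 0)) :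
    ∀ i ≤ g, 0 ≤ p i := by
  have hmono : ∀ i ≤ g, lam 0 ≤ lam i := by
    intro i hi
    induction i with
    | zero => exact le_rfl
    | succ k ih => exact (ih (by omega)).trans (hlam k (by omega)).le
  intro i hi
  rcases i.eq_zero_or_pos with rfl | hpos
  · have : 0 ≤ ∑ i ∈ Icc 1 g, (lam i - lam 0) :=
      sum_nonneg fun i hi => sub_nonneg.2 (hmono i (mem_Icc.1 hi).2)
    linarith
  · have : ∑ j ∈ Icc 1 g, min (lam i - lam 0) (lam j - lam 0) ≤ ∑ j ∈ Icc 1 g, (lam j - lam 0) :=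
      sum_le_sum fun j _ => min_le_right _ _
    linarith [hp i hpos hi]

theorem betaK_on_boundary_general (g : ℕ) (L : ℝ) (lam p : ℕ → ℝ)
    (hlam : ∀ i, i < g → lam i < lam (i + 1))
    (hL : 2 * ∑ i ∈ Finset.Icc 1 g, (lam i - lam 0) < L)
    (hp0 : p 0 = L)
    (hp : ∀ i, 1 ≤ i → i ≤ g →
      p i = L - 2 * ∑ j ∈ Finset.Icc 1 g, min (lam i - lam 0) (lam j - lam 0))
    (Z : Fin g → ℝ) (hZ : ∀ j : Fin g, Z j = -(1/2) * ∑ i, periodK g lam p i j) :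
    (∀ l : Fin g → ℤ, -(∑ i, (l i : ℝ) * Z i) ≤
        (1/2) * ∑ i, ∑ j, (l i : ℝ) * periodK g lam p i j * (l j : ℝ)) ∧
      -(∑ i, Z i) = (1/2) * ∑ i, ∑ j, periodK g lam p i j := by
  refine ⟨fun l => ?_, by simp only [hZ, ← mul_sum]; rw [sum_comm]; ring⟩
  have hlin : -(∑ i, (l i : ℝ) * Z i) = (1/2) * ∑ i, ∑ j, periodK g lam p i j * l j := by
    rw [sum_comm, mul_sum, ← sum_neg_distrib]
    refine sum_congr rfl fun j _ => ?_
    rw [hZ, ← sum_mul]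
    ring
  rw [hlin]
  cases g with
  | zero => simp
  | succ n =>
    have hweights := periodWeights_nonneg (n + 1) L lam p hlam hL hp0 hp
    have hform := sum_sum_periodK_mul_le n lam p hweights (fun a ha => (hlam a ha).le) l
    linarith

/-- Lemma 2.10(i): `Z = βK` with `β = -(1/2)𝕀` lies on the boundary of the
fundamental region `D₀`. -/
theorem betaK_on_boundary (g : ℕ) (hg : 0 < g) (L : ℝ) (lam p : ℕ → ℝ)
    (hlam : ∀ i, i < g → lam i < lam (i + 1))
    (hL : 2 * ∑ i ∈ Finset.Icc 1 g, (lam i - lam 0) < L)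
    (hp0 : p 0 = L)
    (hp : ∀ i, 1 ≤ i → i ≤ g →
      p i = L - 2 * ∑ j ∈ Finset.Icc 1 g, min (lam i - lam 0) (lam j - lam 0))
    (Z : Fin g → ℝ) (hZ : ∀ j : Fin g, Z j = -(1/2) * ∑ i, periodK g lam p i j) :
    (∀ l : Fin g → ℤ, -(∑ i, (l i : ℝ) * Z i) ≤
        (1/2) * ∑ i, ∑ j, (l i : ℝ) * periodK g lam p i j * (l j : ℝ)) ∧
      -(∑ i, Z i) = (1/2) * ∑ i, ∑ j, periodK g lam p i j :=
  betaK_on_boundary_general g L lam p hlam hL hp0 hp Z hZ
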